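/- In ℤ[C₇] one has σ₂(u) = 2 + 2t² − t⁶ − t − t³ and σ₃(u) = 2 + 2t³ − t² − t⁵ − t, and moreover σ₅(u) = t⁵ · σ₂(u) and σ₄(u) = t⁴ · σ₃(u). Consequently, modulo the trivial units ±tᵏ, the six units σᵢ(u) for i ∈ (ℤ/7)ˣ fall into the three classes of u, σ₂(u) and σ₃(u). -/

import Mathlib

/-- `C₇`, the multiplicative cyclic group of order 7. -/
abbrev C7 : Type := Multiplicative (ZMod 7)

/-- The generator `t` of `C₇`, viewed inside the integral group ring `ℤ[C₇]`. -/
noncomputable def t : MonoidAlgebra ℤ C7 :=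
  MonoidAlgebra.of ℤ C7 (Multiplicative.ofAdd (1 : ZMod 7))

/-- The unit `u = 2 + 2t − t³ − t⁴ − t⁵` of `ℤ[C₇]`. -/
noncomputable def u : MonoidAlgebra ℤ C7 := 2 + 2 * t - t ^ 3 - t ^ 4 - t ^ 5

/-- `σᵢ`, the ring automorphism of `ℤ[C₇]` induced by the group automorphism `t ↦ tⁱ`. -/
noncomputable def sigma (i : ℕ) : MonoidAlgebra ℤ C7 →+* MonoidAlgebra ℤ C7 :=
  MonoidAlgebra.mapDomainRingHom ℤ (powMonoidHom i : C7 →* C7)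

/-! The substitution `t ↦ tⁱ` turns `u` into `2 + 2tⁱ − t³ⁱ − t⁴ⁱ − t⁵ⁱ`, and `t⁷ = 1` reduces
the exponents mod 7. The two twisted identities then differ from the reduced ones by multiples
of `t⁷ − 1`, with explicit cofactors. -/

lemma sigma_t (i : ℕ) : sigma i t = t ^ i := by
  simp [sigma, t]

lemma t_pow_seven : t ^ 7 = 1 := by
  rw [t, ← map_pow, ← ofAdd_nsmul]
  rfl

lemma t_pow_add_seven (k : ℕ) : t ^ (k + 7) = t ^ k := by
  rw [pow_add, t_pow_seven, mul_one]

lemma sigma_u (i : ℕ) : sigma i u = 2 + 2 * t ^ i - t ^ (3 * i) - t ^ (4 * i) - t ^ (5 * i) := by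
  simp only [u, map_sub, map_add, map_mul, map_pow, map_ofNat, sigma_t, ← pow_mul']

/-- `σ₂(u) = 2 + 2t² − t⁶ − t − t³`, `σ₃(u) = 2 + 2t³ − t² − t⁵ − t`,
`σ₅(u) = t⁵·σ₂(u)` and `σ₄(u) = t⁴·σ₃(u)` in `ℤ[C₇]`; consequently, modulo trivial units
`±tᵏ`, the six units `σᵢ(u)` for `i ∈ (ℤ/7)ˣ` fall into the classes of `u`, `σ₂(u)`,
`σ₃(u)`. -/
theorem sigma_u_classes :
    sigma 2 u = 2 + 2 * t ^ 2 - t ^ 6 - t - t ^ 3 ∧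
    sigma 3 u = 2 + 2 * t ^ 3 - t ^ 2 - t ^ 5 - t ∧
    sigma 5 u = t ^ 5 * sigma 2 u ∧
    sigma 4 u = t ^ 4 * sigma 3 u := by
  have h2 : sigma 2 u = 2 + 2 * t ^ 2 - t ^ 6 - t - t ^ 3 := by
    simp only [sigma_u, t_pow_add_seven]
    ring
  have h3 : sigma 3 u = 2 + 2 * t ^ 3 - t ^ 2 - t ^ 5 - t := by
    simp only [sigma_u, t_pow_add_seven]
    ring
  refine ⟨h2, h3, ?_, ?_⟩
  · rw [h2]
    simp only [sigma_u, t_pow_add_seven]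
    linear_combination (t ^ 4 + t - 2) * t_pow_seven
  · rw [h3]
    simp only [sigma_u, t_pow_add_seven]
    linear_combination (t ^ 2 - 2) * t_pow_seven
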